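/- arXiv:1506.07124 — 2 statements merged into one kernel-verified Lean document; each statement's English description precedes it below -/
import Mathlib

section
/- Let P (n×ℓ) and Q (n×m) be joint probability matrices. Q ≺_c P if and only if for every n×m matrix A = [a₁,...,a_m] with nonnegative entries, Σ_{y=1}^ℓ p_y Φ_A(p^{|y}) ≥ Σ_{w=1}^m q_w Φ_A(q^{|w}), where Φ_A(v) = max_{w ≤ m} (a_w↓)ᵀ v↓, with v↓ denoting the nonincreasing rearrangement of the vector v. -/
open Matrix Finset

/-- Row-stochastic matrix: nonnegative entries, each row sums to 1. -/
def RowStoch {ℓ m : ℕ} (T : Matrix (Fin ℓ) (Fin m) ℝ) : Prop :=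
  (∀ y w, 0 ≤ T y w) ∧ ∀ y, ∑ w, T y w = 1

/-- Doubly stochastic matrix. -/
def DStoch {n : ℕ} (D : Matrix (Fin n) (Fin n) ℝ) : Prop :=
  (∀ i j, 0 ≤ D i j) ∧ (∀ i, ∑ j, D i j = 1) ∧ (∀ j, ∑ i, D i j = 1)

/-- Conditional majorization `P ≻_c Q` via classical-conditioned random relabelings:
`Q = ∑ j, D j * P * R j` with each `D j` doubly stochastic, each `R j` entrywise
nonnegative, and `∑ j, R j` row-stochastic. -/
def CondMaj {n ℓ m : ℕ} (P : Matrix (Fin n) (Fin ℓ) ℝ)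
    (Q : Matrix (Fin n) (Fin m) ℝ) : Prop :=
  ∃ (J : ℕ) (D : Fin J → Matrix (Fin n) (Fin n) ℝ)
    (R : Fin J → Matrix (Fin ℓ) (Fin m) ℝ),
    (∀ j, DStoch (D j)) ∧ (∀ j y w, 0 ≤ R j y w) ∧
    RowStoch (∑ j, R j) ∧ Q = ∑ j, D j * P * R j

/-- Joint probability matrix: nonnegative entries summing to one. -/
def JointProb {n ℓ : ℕ} (P : Matrix (Fin n) (Fin ℓ) ℝ) : Prop :=
  (∀ x y, 0 ≤ P x y) ∧ ∑ x, ∑ y, P x y = 1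

/-- Column sum (marginal). -/
noncomputable def ColSum {n m : ℕ} (Q : Matrix (Fin n) (Fin m) ℝ) (w : Fin m) : ℝ :=
  ∑ x, Q x w
/-- Nonincreasing rearrangement of a vector. -/
noncomputable def sortDesc {n : ℕ} (u : Fin n → ℝ) : Fin n → ℝ :=
  fun i => u (Tuple.sort (fun j => -u j) i)

/-- Sum of the `k` largest entries of `u`. -/
noncomputable def pSumDesc {n : ℕ} (u : Fin n → ℝ) (k : ℕ) : ℝ :=
  ∑ i ∈ Finset.univ.filter (fun i : Fin n => (i : ℕ) < k), sortDesc u i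

/-- `Majorizes u v` means `u ≻ v`: all partial sums of the sorted `u` dominate
those of `v`, and the total sums coincide. -/
def Majorizes {n : ℕ} (u v : Fin n → ℝ) : Prop :=
  (∀ k : ℕ, pSumDesc v k ≤ pSumDesc u k) ∧ ∑ i, u i = ∑ i, v i

/-- `Φ_A(v) = max_w (a_w↓)ᵀ v↓`. -/
noncomputable def PhiA {n m : ℕ} (A : Matrix (Fin n) (Fin (m + 1)) ℝ) (v : Fin n → ℝ) : ℝ :=
  Finset.univ.sup' Finset.univ_nonempty
    (fun w : Fin (m + 1) => ∑ i, sortDesc (fun x => A x w) i * sortDesc v i)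

/-!
Write `φ_A u = max_{w, σ} ∑ x, A x w * u (σ x)`. By the rearrangement inequality
`q_w Φ_A(q^{|w}) = φ_A (q_{·w})`, and `φ_A` is sublinear and invariant under permutations, hence
(Birkhoff) does not increase under doubly stochastic matrices; this gives the forward direction.

Conversely, the mixtures `∑ y ∑ π, t_y(w, π) P(π x, y)`, with each `t_y` a probability vector
on pairs `(w, π)`, form a compact convex set of matrices `≺_c P`. If `Q` lay outside it, a
separating functional with matrix `B` would satisfy `∑_w φ_B(q_{·w}) > ∑_y φ_B(p_{·y})`, the
right side being the maximum of the functional on that set. Adding a constant to `B` makes it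
nonnegative and shifts both sides by the same amount, because `P` and `Q` both have total mass one.
-/

section phiHomog

variable {α ι : Type*} [Fintype α] [DecidableEq α] [Fintype ι] [Nonempty ι]

/-- The positively homogeneous form of `PhiA`: `(∑ u) * PhiA A (u / ∑ u) = phiHomog A u`
for `u ≥ 0` (see `sum_mul_PhiA_div_sum`). -/
noncomputable def phiHomog (A : Matrix α ι ℝ) (u : α → ℝ) : ℝ :=
  (univ : Finset (ι × Equiv.Perm α)).sup' univ_nonempty fun p => ∑ x, A x p.1 * u (p.2 x)

variable (A : Matrix α ι ℝ)

lemma le_phiHomog (u : α → ℝ) (w : ι) (σ : Equiv.Perm α) :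
    ∑ x, A x w * u (σ x) ≤ phiHomog A u :=
  le_sup' (fun p : ι × Equiv.Perm α => ∑ x, A x p.1 * u (p.2 x)) (mem_univ (w, σ))

lemma phiHomog_le {u : α → ℝ} {c : ℝ} (h : ∀ w (σ : Equiv.Perm α), ∑ x, A x w * u (σ x) ≤ c) :
    phiHomog A u ≤ c :=
  sup'_le _ _ fun p _ => h p.1 p.2

lemma exists_phiHomog_eq (u : α → ℝ) :
    ∃ (w : ι) (σ : Equiv.Perm α), phiHomog A u = ∑ x, A x w * u (σ x) := by
  obtain ⟨p, -, hp⟩ := exists_mem_eq_sup' univ_nonempty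
    fun p : ι × Equiv.Perm α => ∑ x, A x p.1 * u (p.2 x)
  exact ⟨p.1, p.2, hp⟩

lemma phiHomog_smul (u : α → ℝ) {c : ℝ} (hc : 0 ≤ c) : phiHomog A (c • u) = c * phiHomog A u := by
  have key : ∀ w (σ : Equiv.Perm α), ∑ x, A x w * (c • u) (σ x) = c * ∑ x, A x w * u (σ x) := by
    intro w σ
    simp only [Pi.smul_apply, smul_eq_mul, mul_sum]
    exact sum_congr rfl fun x _ => by ring
  obtain ⟨w, σ, hwσ⟩ := exists_phiHomog_eq A u
  refine le_antisymm (phiHomog_le A fun w (σ : Equiv.Perm α) => ?_) ?_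
  · rw [key]
    exact mul_le_mul_of_nonneg_left (le_phiHomog A u w σ) hc
  · rw [hwσ, ← key]
    exact le_phiHomog A _ w σ

lemma phiHomog_sum_le {κ : Type*} (s : Finset κ) (u : κ → α → ℝ) :
    phiHomog A (∑ k ∈ s, u k) ≤ ∑ k ∈ s, phiHomog A (u k) :=
  phiHomog_le A fun w σ => by
    simp only [Finset.sum_apply, mul_sum]
    rw [sum_comm]
    exact sum_le_sum fun k _ => le_phiHomog A (u k) w σ

lemma phiHomog_comp_perm (u : α → ℝ) (τ : Equiv.Perm α) : phiHomog A (u ∘ τ) ≤ phiHomog A u :=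
  phiHomog_le A fun w σ => le_phiHomog A u w (σ.trans τ)

lemma phiHomog_mulVec_le {D : Matrix α α ℝ} (hD : D ∈ doublyStochastic ℝ α) (u : α → ℝ) :
    phiHomog A (D *ᵥ u) ≤ phiHomog A u := by
  obtain ⟨c, hc0, hc1, rfl⟩ := exists_eq_sum_perm_of_mem_doublyStochastic hD
  calc phiHomog A ((∑ σ, c σ • σ.permMatrix ℝ) *ᵥ u)
      = phiHomog A (∑ σ, c σ • (u ∘ σ)) := by
        simp only [sum_mulVec, smul_mulVec, Matrix.permMatrix_mulVec]
    _ ≤ ∑ σ, c σ * phiHomog A (u ∘ σ) := by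
        refine (phiHomog_sum_le A _ _).trans (le_of_eq (sum_congr rfl fun σ _ => ?_))
        exact phiHomog_smul A _ (hc0 σ)
    _ ≤ ∑ σ, c σ * phiHomog A u :=
        sum_le_sum fun σ _ => mul_le_mul_of_nonneg_left (phiHomog_comp_perm A u σ) (hc0 σ)
    _ = phiHomog A u := by rw [← sum_mul, hc1, one_mul]

lemma phiHomog_add_const (u : α → ℝ) (c : ℝ) :
    phiHomog (fun x w => A x w + c) u = phiHomog A u + c * ∑ x, u x := by
  have key : ∀ w (σ : Equiv.Perm α),
      ∑ x, (A x w + c) * u (σ x) = ∑ x, A x w * u (σ x) + c * ∑ x, u x := by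
    intro w σ
    rw [← Equiv.sum_comp σ u, mul_sum, ← sum_add_distrib]
    exact sum_congr rfl fun x _ => by ring
  obtain ⟨w, σ, hwσ⟩ := exists_phiHomog_eq A u
  refine le_antisymm (phiHomog_le _ fun w (σ : Equiv.Perm α) => ?_) ?_
  · rw [key]
    linarith [le_phiHomog A u w σ]
  · rw [hwσ, ← key]
    exact le_phiHomog (fun x w => A x w + c) u w σ

lemma sum_phiHomog_add_const {κ : Type*} [Fintype κ] (B : Matrix α ι ℝ) (c : ℝ)
    {Q : Matrix α κ ℝ} (hQ : ∑ x, ∑ y, Q x y = 1) :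
    ∑ y, phiHomog (fun x w => B x w + c) (fun x => Q x y) =
      ∑ y, phiHomog B (fun x => Q x y) + c := by
  calc ∑ y, phiHomog (fun x w => B x w + c) (fun x => Q x y)
      = ∑ y, phiHomog B (fun x => Q x y) + c * ∑ y, ∑ x, Q x y := by
        rw [mul_sum, ← sum_add_distrib]
        exact sum_congr rfl fun y _ => phiHomog_add_const B _ c
    _ = ∑ y, phiHomog B (fun x => Q x y) + c := by rw [sum_comm, hQ, mul_one]

end phiHomog

lemma sortDesc_antitone {n : ℕ} (u : Fin n → ℝ) : Antitone (sortDesc u) := fun _ _ hij => by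
  simpa [sortDesc] using Tuple.monotone_sort (fun j => -u j) hij

lemma monovary_sortDesc {n : ℕ} (a v : Fin n → ℝ) : Monovary (sortDesc a) (sortDesc v) :=
  fun _ _ hij => sortDesc_antitone a (le_of_lt <| (sortDesc_antitone v).reflect_lt hij)

lemma sum_sortDesc_mul_sortDesc {n : ℕ} (a v : Fin n → ℝ) :
    ∑ i, sortDesc a i * sortDesc v i =
      (univ : Finset (Equiv.Perm (Fin n))).sup' univ_nonempty fun σ => ∑ i, a i * v (σ i) := by
  set τa := Tuple.sort fun j => -a j
  set τv := Tuple.sort fun j => -v j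
  refine le_antisymm ?_ (sup'_le _ _ fun σ _ => ?_)
  · refine le_trans (le_of_eq ?_)
      (le_sup' (fun σ => ∑ i, a i * v (σ i)) (mem_univ (τa.symm.trans τv)))
    rw [← Equiv.sum_comp τa (fun i => a i * v ((τa.symm.trans τv) i))]
    simp [sortDesc, τa, τv]
  · calc ∑ i, a i * v (σ i)
        = ∑ i, sortDesc a i * sortDesc v ((τa.trans (σ.trans τv.symm)) i) := by
          rw [← Equiv.sum_comp τa]
          simp [sortDesc, τa, τv]
      _ ≤ _ := (monovary_sortDesc a v).sum_mul_comp_perm_le_sum_mul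

lemma PhiA_eq_phiHomog {n m : ℕ} (A : Matrix (Fin n) (Fin (m + 1)) ℝ) (v : Fin n → ℝ) :
    PhiA A v = phiHomog A v := by
  simp only [PhiA, phiHomog, sum_sortDesc_mul_sortDesc, ← univ_product_univ,
    sup'_product_left]

lemma sum_mul_PhiA_div_sum {n m : ℕ} (A : Matrix (Fin n) (Fin (m + 1)) ℝ) {u : Fin n → ℝ}
    (hu : ∀ x, 0 ≤ u x) : (∑ x, u x) * PhiA A (fun x => u x / ∑ x, u x) = phiHomog A u := by
  rcases (sum_nonneg fun x _ => hu x).eq_or_lt with hs | hs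
  · -- a zero column: the division is junk and both sides vanish
    have hu0 : u = 0 :=
      funext fun x => (sum_eq_zero_iff_of_nonneg fun x _ => hu x).1 hs.symm x (mem_univ x)
    simpa [hu0] using (phiHomog_smul A 0 le_rfl).symm
  · have hv : (fun x => u x / ∑ x, u x) = (∑ x, u x)⁻¹ • u := by
      funext x; simp [div_eq_inv_mul]
    rw [hv, PhiA_eq_phiHomog, phiHomog_smul A u (inv_nonneg.2 hs.le), mul_inv_cancel_left₀ hs.ne']

lemma sum_colSum_mul_PhiA {n ℓ m : ℕ} (A : Matrix (Fin n) (Fin (m + 1)) ℝ)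
    {P : Matrix (Fin n) (Fin ℓ) ℝ} (hP : ∀ x y, 0 ≤ P x y) :
    ∑ y, ColSum P y * PhiA A (fun x => P x y / ColSum P y) = ∑ y, phiHomog A (fun x => P x y) :=
  sum_congr rfl fun y _ => sum_mul_PhiA_div_sum A fun x => hP x y

lemma sum_phiHomog_le_of_condMaj {n ℓ m : ℕ} [NeZero m] {P : Matrix (Fin n) (Fin ℓ) ℝ}
    {Q : Matrix (Fin n) (Fin m) ℝ} (h : CondMaj P Q) (A : Matrix (Fin n) (Fin m) ℝ) :
    ∑ w, phiHomog A (fun x => Q x w) ≤ ∑ y, phiHomog A (fun x => P x y) := by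
  obtain ⟨J, D, R, hD, hR0, ⟨-, hR1⟩, rfl⟩ := h
  have hcol : ∀ w, (fun x => (∑ j, D j * P * R j) x w) =
      ∑ p : Fin J × Fin ℓ, R p.1 p.2 w • (D p.1 *ᵥ fun x => P x p.2) := by
    intro w
    ext x
    simp only [Matrix.sum_apply, Finset.sum_apply, Pi.smul_apply, smul_eq_mul, mul_apply, mulVec,
      dotProduct, Fintype.sum_prod_type, sum_mul, mul_sum]
    exact sum_congr rfl fun j _ => sum_congr rfl fun y _ => sum_congr rfl fun x' _ => by ring
  calc ∑ w, phiHomog A (fun x => (∑ j, D j * P * R j) x w)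
      ≤ ∑ w, ∑ p : Fin J × Fin ℓ, R p.1 p.2 w * phiHomog A (fun x => P x p.2) := by
        refine sum_le_sum fun w _ => ?_
        rw [hcol]
        refine (phiHomog_sum_le A _ _).trans (sum_le_sum fun p _ => ?_)
        rw [phiHomog_smul A _ (hR0 _ _ _)]
        exact mul_le_mul_of_nonneg_left
          (phiHomog_mulVec_le A ((mem_doublyStochastic_iff_sum).2 (hD p.1)) _) (hR0 _ _ _)
    _ = ∑ y, (∑ w, (∑ j, R j : Matrix (Fin ℓ) (Fin m) ℝ) y w) * phiHomog A (fun x => P x y) := by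
        simp only [Fintype.sum_prod_type, Matrix.sum_apply, sum_mul]
        exact (sum_congr rfl fun w _ => sum_comm).trans sum_comm
    _ = ∑ y, phiHomog A (fun x => P x y) := by simp only [hR1, one_mul]

lemma strongDual_apply_eq_sum {α ι : Type*} [Fintype α] [Fintype ι] [DecidableEq α]
    [DecidableEq ι]
    (f : StrongDual ℝ (α → ι → ℝ)) (X : α → ι → ℝ) :
    f X = ∑ x, ∑ w, f (Pi.single x (Pi.single w 1)) * X x w := by
  have hX : X = ∑ x, ∑ w, X x w • Pi.single x (Pi.single w 1 : ι → ℝ) := by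
    ext a b
    simp [Finset.sum_apply, Pi.single_apply, ite_apply]
  conv_lhs => rw [hX]
  simp only [map_sum, map_smul, smul_eq_mul, mul_comm]

lemma condMaj_of_fintype {n ℓ m : ℕ} {P : Matrix (Fin n) (Fin ℓ) ℝ}
    {Q : Matrix (Fin n) (Fin m) ℝ} {κ : Type*} [Fintype κ] (D : κ → Matrix (Fin n) (Fin n) ℝ)
    (R : κ → Matrix (Fin ℓ) (Fin m) ℝ) (hD : ∀ k, DStoch (D k)) (hR0 : ∀ k y w, 0 ≤ R k y w)
    (hR : RowStoch (∑ k, R k)) (hQ : Q = ∑ k, D k * P * R k) : CondMaj P Q := by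
  let e := Fintype.equivFin κ
  refine ⟨Fintype.card κ, D ∘ e.symm, R ∘ e.symm, fun _ => hD _, fun _ => hR0 _, ?_, ?_⟩
  · simpa only [Function.comp_apply, e.symm.sum_comp R] using hR
  · rw [hQ]
    exact (e.symm.sum_comp fun k => D k * P * R k).symm

section permMix

variable {α ι κ : Type*} [Fintype α] [DecidableEq α] [Fintype ι] [Fintype κ]

noncomputable def permMix (P : Matrix α κ ℝ) : (κ → ι × Equiv.Perm α → ℝ) →ₗ[ℝ] (α → ι → ℝ) where
  toFun t x w := ∑ y, ∑ π : Equiv.Perm α, t y (w, π) * P (π x) y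
  map_add' t t' := by
    ext x w
    simp only [Pi.add_apply, add_mul, sum_add_distrib]
  map_smul' c t := by
    ext x w
    simp only [Pi.smul_apply, smul_eq_mul, RingHom.id_apply, mul_sum, mul_assoc]

def permMixtures (P : Matrix α κ ℝ) (ι : Type*) [Fintype ι] : Set (α → ι → ℝ) :=
  permMix P '' Set.univ.pi fun _ => stdSimplex ℝ (ι × Equiv.Perm α)

variable (P : Matrix α κ ℝ)

lemma convex_permMixtures : Convex ℝ (permMixtures P ι) :=
  (convex_pi fun _ _ => convex_stdSimplex ℝ _).linear_image _

lemma isCompact_permMixtures : IsCompact (permMixtures P ι) :=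
  (isCompact_univ_pi fun _ => isCompact_stdSimplex ℝ _).image
    (permMix P).continuous_of_finiteDimensional

lemma sum_mul_permMix (B : Matrix α ι ℝ) (t : κ → ι × Equiv.Perm α → ℝ) :
    ∑ x, ∑ w, B x w * permMix P t x w =
      ∑ y, ∑ p : ι × Equiv.Perm α, t y p * ∑ x, B x p.1 * P (p.2 x) y := by
  simp only [permMix, LinearMap.coe_mk, AddHom.coe_mk, mul_sum, Fintype.sum_prod_type]
  refine ((sum_congr rfl fun x _ => sum_comm).trans sum_comm).trans
    (sum_congr rfl fun y _ => sum_comm.trans (sum_congr rfl fun w _ => sum_comm.trans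
      (sum_congr rfl fun π _ => sum_congr rfl fun x _ => mul_left_comm _ _ _)))

lemma exists_mem_permMixtures_sum_mul_eq [Nonempty ι] [DecidableEq ι] (B : Matrix α ι ℝ) :
    ∃ X ∈ permMixtures P ι, ∑ x, ∑ w, B x w * X x w = ∑ y, phiHomog B (fun x => P x y) := by
  choose w σ hwσ using fun y => exists_phiHomog_eq B (fun x => P x y)
  refine ⟨permMix P fun y => Pi.single (w y, σ y) 1,
    Set.mem_image_of_mem _ fun y _ => single_mem_stdSimplex ℝ _, ?_⟩
  rw [sum_mul_permMix]
  refine sum_congr rfl fun y _ => ?_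
  simp [Pi.single_apply, hwσ]

end permMix

lemma condMaj_of_mem_permMixtures {n ℓ m : ℕ} {P : Matrix (Fin n) (Fin ℓ) ℝ}
    {Q : Matrix (Fin n) (Fin m) ℝ} (hQ : Q ∈ permMixtures P (Fin m)) : CondMaj P Q := by
  obtain ⟨t, ht, rfl⟩ := hQ
  simp only [Set.mem_univ_pi] at ht
  refine condMaj_of_fintype (fun π : Equiv.Perm (Fin n) => π.permMatrix ℝ)
    (fun π => Matrix.of fun y w => t y (w, π))
    (fun _ => (mem_doublyStochastic_iff_sum).1 permMatrix_mem_doublyStochastic)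
    (fun _ y _ => (ht y).1 _) ⟨fun y w => ?_, fun y => ?_⟩ ?_
  · rw [Matrix.sum_apply]
    exact sum_nonneg fun _ _ => (ht y).1 _
  · simpa [Matrix.sum_apply, Fintype.sum_prod_type] using (ht y).2
  · ext x w
    simp only [permMix, LinearMap.coe_mk, AddHom.coe_mk, PEquiv.toMatrix_toPEquiv_mul,
      Matrix.sum_apply, mul_apply, submatrix_apply, id_eq, of_apply]
    rw [sum_comm]
    exact sum_congr rfl fun _ _ => sum_congr rfl fun _ _ => mul_comm _ _

lemma condMaj_of_forall_sum_phiHomog_le {n ℓ m : ℕ} [NeZero m] {P : Matrix (Fin n) (Fin ℓ) ℝ}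
    {Q : Matrix (Fin n) (Fin m) ℝ}
    (h : ∀ B : Matrix (Fin n) (Fin m) ℝ,
      ∑ w, phiHomog B (fun x => Q x w) ≤ ∑ y, phiHomog B (fun x => P x y)) :
    CondMaj P Q := by
  by_contra hPQ
  obtain ⟨f, u, hfK, hfQ⟩ := geometric_hahn_banach_closed_point (convex_permMixtures P)
    (isCompact_permMixtures P).isClosed fun hQ => hPQ (condMaj_of_mem_permMixtures hQ)
  set B : Matrix (Fin n) (Fin m) ℝ := fun x w => f (Pi.single x (Pi.single w 1))
  obtain ⟨X, hX, hXB⟩ := exists_mem_permMixtures_sum_mul_eq P B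
  have hPB : ∑ y, phiHomog B (fun x => P x y) < u := by
    rw [← hXB, ← strongDual_apply_eq_sum]
    exact hfK X hX
  have hQB : u < ∑ w, phiHomog B (fun x => Q x w) := by
    refine hfQ.trans_le ((strongDual_apply_eq_sum f Q).trans_le ?_)
    rw [sum_comm]
    exact sum_le_sum fun w _ => le_phiHomog B (fun x => Q x w) w 1
  linarith [h B]

theorem stmt7 {n ℓ m : ℕ} (P : Matrix (Fin n) (Fin ℓ) ℝ)
    (Q : Matrix (Fin n) (Fin (m + 1)) ℝ)
    (hP : JointProb P) (hQ : JointProb Q) :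
    CondMaj P Q ↔
      ∀ A : Matrix (Fin n) (Fin (m + 1)) ℝ, (∀ x w, 0 ≤ A x w) →
        ∑ w, ColSum Q w * PhiA A (fun x => Q x w / ColSum Q w) ≤
          ∑ y, ColSum P y * PhiA A (fun x => P x y / ColSum P y) := by
  simp only [sum_colSum_mul_PhiA _ hP.1, sum_colSum_mul_PhiA _ hQ.1]
  refine ⟨fun h A _ => sum_phiHomog_le_of_condMaj h A,
    fun h => condMaj_of_forall_sum_phiHomog_le fun B => ?_⟩
  obtain ⟨c, hc⟩ := (Set.finite_range (Function.uncurry B)).bddBelow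
  have hBc := h (fun x w => B x w + -c) fun x w => by
    linarith [(hc ⟨(x, w), rfl⟩ : c ≤ B x w)]
  rw [sum_phiHomog_add_const B _ hQ.2, sum_phiHomog_add_const B _ hP.2] at hBc
  linarith
end

section
/- For n×n vectors: let u, v ∈ ℝⁿ with nonnegative entries. Then u is weakly majorized by v (Σ_{i=1}^k u↓_i ≤ Σ_{i=1}^k v↓_i for all k) if and only if there exists a doubly stochastic matrix D with u ≤ Dv entrywise. -/
/-!
If `u ≤ D v` with `D` doubly stochastic, the sum of the `k` largest entries of `u` is at most
`∑ⱼ cⱼ vⱼ` for weights `cⱼ ∈ [0, 1]` (column sums of `k` rows of `D`) with total mass equal to the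
number of those entries, and such a weighted sum never exceeds the sum of the `k` largest entries
of `v`.

Conversely, the vectors lying below some `D v` form the closed convex set `S + (-∞, 0]ⁿ`, where
`S = {D v}` is compact by Birkhoff's theorem. A functional `a` separating `u` from this set must be
nonnegative, and then the rearrangement inequality and Abel summation against the decreasing
weights `a↓` give `a ⬝ u ≤ a↓ ⬝ u↓ ≤ a↓ ⬝ v↓ = a ⬝ (v ∘ σ)` for some permutation `σ`; since
`v ∘ σ = P_σ v ∈ S`, this contradicts the separation.
-/

open Matrix Finset

open scoped Pointwise

section Sorting

variable {n : ℕ}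

noncomputable def sortDescPerm (u : Fin n → ℝ) : Equiv.Perm (Fin n) :=
  Tuple.sort (fun j => -u j)

lemma sortDesc_apply (u : Fin n → ℝ) (i : Fin n) : sortDesc u i = u (sortDescPerm u i) := rfl

lemma antitone_sortDesc (u : Fin n → ℝ) : Antitone (sortDesc u) := fun _ _ hij =>
  neg_le_neg_iff.mp (Tuple.monotone_sort (fun j => -u j) hij)

lemma dotProduct_le_sortDesc_dotProduct_sortDesc (a w : Fin n → ℝ) :
    a ⬝ᵥ w ≤ sortDesc a ⬝ᵥ sortDesc w := by
  have hre : a ⬝ᵥ w =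
      ∑ i, sortDesc a i * sortDesc w ((sortDescPerm w)⁻¹ (sortDescPerm a i)) := by
    rw [dotProduct, ← Equiv.sum_comp (sortDescPerm a)]
    simp [sortDesc_apply]
  rw [hre]
  exact ((antitone_sortDesc a).monovary (antitone_sortDesc w)).sum_mul_comp_perm_le_sum_mul
    (σ := (sortDescPerm a).trans (sortDescPerm w)⁻¹)

lemma exists_perm_sortDesc_dotProduct_sortDesc_eq (a w : Fin n → ℝ) :
    ∃ σ : Equiv.Perm (Fin n), sortDesc a ⬝ᵥ sortDesc w = a ⬝ᵥ (w ∘ σ) := by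
  refine ⟨sortDescPerm w * (sortDescPerm a)⁻¹, ?_⟩
  rw [dotProduct, dotProduct, ← Equiv.sum_comp (sortDescPerm a) (fun j => a j * _)]
  simp [sortDesc_apply]

end Sorting

lemma sum_range_mul_nonneg_of_antitone {f g : ℕ → ℝ} (N : ℕ) (hf : Antitone f)
    (hf0 : 0 ≤ f) (hg : ∀ k ≤ N, 0 ≤ ∑ i ∈ range k, g i) :
    0 ≤ ∑ i ∈ range N, f i * g i := by
  have hparts := sum_range_by_parts f g N
  simp only [smul_eq_mul] at hparts
  rw [hparts]
  refine sub_nonneg.mpr <| (sum_nonpos fun i hi => ?_).trans (mul_nonneg (hf0 _) (hg N le_rfl))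
  have hi : i + 1 ≤ N := by have := mem_range.mp hi; omega
  exact mul_nonpos_of_nonpos_of_nonneg (sub_nonpos.mpr (hf i.le_succ)) (hg _ hi)

lemma sum_mul_le_sum_of_threshold {ι : Type*} [Fintype ι] (T : Finset ι) {c v : ι → ℝ} (t : ℝ)
    (hc0 : ∀ j, 0 ≤ c j) (hc1 : ∀ j, c j ≤ 1) (hc : ∑ j, c j = #T)
    (hT : ∀ j ∈ T, t ≤ v j) (hTc : ∀ j ∉ T, v j ≤ t) :
    ∑ j, c j * v j ≤ ∑ j ∈ T, v j := by
  classical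
  -- termwise `(cⱼ - 1_T j) (vⱼ - t) ≤ 0`, and the `t`-terms cancel since `∑ c = #T`
  have hterm : ∀ j, c j * v j - (if j ∈ T then v j else 0) ≤
      (c j - if j ∈ T then 1 else 0) * t := by
    intro j
    by_cases hj : j ∈ T
    · simp only [if_pos hj]
      nlinarith [mul_nonneg (sub_nonneg.mpr (hc1 j)) (sub_nonneg.mpr (hT j hj))]
    · simp only [if_neg hj]
      nlinarith [mul_nonneg (hc0 j) (sub_nonneg.mpr (hTc j hj))]
  have hsum := sum_le_sum fun j (_ : j ∈ univ) => hterm j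
  rw [sum_sub_distrib, ← sum_mul, sum_sub_distrib, hc, ← sum_filter, ← sum_filter] at hsum
  simpa using hsum

section PrefixSums

variable {n : ℕ}

noncomputable def prefixSum (x : Fin n → ℝ) (k : ℕ) : ℝ :=
  ∑ i ∈ univ.filter (fun i : Fin n => (i : ℕ) < k), x i

lemma pSumDesc_eq_prefixSum (u : Fin n → ℝ) (k : ℕ) :
    pSumDesc u k = prefixSum (sortDesc u) k := rfl

noncomputable def extendByZero (d : Fin n → ℝ) (i : ℕ) : ℝ :=
  if h : i < n then d ⟨i, h⟩ else 0

lemma extendByZero_val (d : Fin n → ℝ) (i : Fin n) : extendByZero d i = d i := by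
  simp [extendByZero]

lemma extendByZero_nonneg {b : Fin n → ℝ} (hb0 : 0 ≤ b) : 0 ≤ extendByZero b := fun i => by
  unfold extendByZero
  split_ifs
  exacts [hb0 _, le_rfl]

lemma antitone_extendByZero {b : Fin n → ℝ} (hb : Antitone b) (hb0 : 0 ≤ b) :
    Antitone (extendByZero b) := by
  intro i j hij
  by_cases hj : j < n
  · simp only [extendByZero, dif_pos hj, dif_pos (hij.trans_lt hj)]
    exact hb (Fin.mk_le_mk.mpr hij)
  · simp only [extendByZero, dif_neg hj]
    exact extendByZero_nonneg hb0 i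

lemma sum_range_extendByZero (d : Fin n → ℝ) (k : ℕ) :
    ∑ i ∈ range k, extendByZero d i = prefixSum d k := by
  have hzero : ∀ i ∈ range k, i ∉ (range k).filter (· < n) → extendByZero d i = 0 :=
    fun i _ hi => dif_neg fun h => hi (by simp_all)
  calc ∑ i ∈ range k, extendByZero d i = ∑ i ∈ (range k).filter (· < n), extendByZero d i :=
        (sum_subset (filter_subset _ _) hzero).symm
    _ = ∑ i ∈ (range n).filter (· < k), extendByZero d i := by
        congr 1; ext; simp [and_comm]
    _ = ∑ i : Fin n, if (i : ℕ) < k then d i else 0 := by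
        rw [sum_filter, ← Fin.sum_univ_eq_sum_range]; simp only [extendByZero_val]
    _ = prefixSum d k := (sum_filter _ _).symm

lemma dotProduct_le_dotProduct_of_prefixSum_le {b x y : Fin n → ℝ} (hb : Antitone b)
    (hb0 : 0 ≤ b) (h : ∀ k, prefixSum x k ≤ prefixSum y k) : b ⬝ᵥ x ≤ b ⬝ᵥ y := by
  have key := sum_range_mul_nonneg_of_antitone (g := extendByZero (y - x)) n
    (antitone_extendByZero hb hb0) (extendByZero_nonneg hb0) fun k _ => by
      rw [sum_range_extendByZero, prefixSum]
      simp only [Pi.sub_apply, sum_sub_distrib, sub_nonneg]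
      exact h k
  rw [← Fin.sum_univ_eq_sum_range] at key
  simp only [extendByZero_val, Pi.sub_apply, mul_sub, sum_sub_distrib, sub_nonneg] at key
  exact key

lemma exists_threshold_of_antitone {f : Fin n → ℝ} (hf : Antitone f) (k : ℕ) :
    ∃ t, (∀ i : Fin n, (i : ℕ) < k → t ≤ f i) ∧ ∀ i : Fin n, k ≤ (i : ℕ) → f i ≤ t := by
  by_cases hk : k < n
  · exact ⟨f ⟨k, hk⟩, fun i hi => hf (Fin.mk_le_mk.mpr hi.le), fun i hi => hf hi⟩
  · exact ⟨⨅ i, f i, fun i _ => ciInf_le (Set.finite_range f).bddBelow i,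
      fun i hi => absurd i.isLt (by omega)⟩

lemma sum_mul_le_pSumDesc {c : Fin n → ℝ} (v : Fin n → ℝ) (k : ℕ) (hc0 : ∀ j, 0 ≤ c j)
    (hc1 : ∀ j, c j ≤ 1) (hc : ∑ j, c j = #(univ.filter fun i : Fin n => (i : ℕ) < k)) :
    ∑ j, c j * v j ≤ pSumDesc v k := by
  obtain ⟨t, ht_lt, ht_ge⟩ := exists_threshold_of_antitone (antitone_sortDesc v) k
  rw [← Equiv.sum_comp (sortDescPerm v) c] at hc
  rw [← Equiv.sum_comp (sortDescPerm v)]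
  exact sum_mul_le_sum_of_threshold _ t (fun i => hc0 _) (fun i => hc1 _) hc
    (fun i hi => ht_lt i (mem_filter.mp hi).2) fun i hi => ht_ge i (by simpa using hi)

lemma pSumDesc_le_of_le_mulVec {u v : Fin n → ℝ} {D : Matrix (Fin n) (Fin n) ℝ} (hD : DStoch D)
    (h : u ≤ D *ᵥ v) (k : ℕ) : pSumDesc u k ≤ pSumDesc v k := by
  obtain ⟨hD0, hD_row, hD_col⟩ := hD
  set F := univ.filter fun i : Fin n => (i : ℕ) < k
  set c : Fin n → ℝ := fun j => ∑ i ∈ F, D (sortDescPerm u i) j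
  have hc1 : ∀ j, c j ≤ 1 := fun j => calc
    c j ≤ ∑ i, D (sortDescPerm u i) j :=
        sum_le_sum_of_subset_of_nonneg (subset_univ F) fun i _ _ => hD0 _ _
    _ = 1 := by rw [Equiv.sum_comp (sortDescPerm u) (fun i => D i j), hD_col]
  have hc : ∑ j, c j = #F := by rw [sum_comm]; simp [hD_row]
  calc pSumDesc u k = ∑ i ∈ F, u (sortDescPerm u i) := rfl
    _ ≤ ∑ i ∈ F, ∑ j, D (sortDescPerm u i) j * v j := sum_le_sum fun i _ => h _
    _ = ∑ j, c j * v j := by simp only [c, sum_mul]; exact sum_comm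
    _ ≤ pSumDesc v k := sum_mul_le_pSumDesc v k (fun j => sum_nonneg fun i _ => hD0 _ _) hc1 hc

end PrefixSums

lemma exists_le_of_forall_dotProduct_le {ι : Type*} [Fintype ι] {S : Set (ι → ℝ)}
    (hS_cpt : IsCompact S) (hS_conv : Convex ℝ S) {u : ι → ℝ}
    (h : ∀ a : ι → ℝ, 0 ≤ a → ∃ x ∈ S, a ⬝ᵥ u ≤ a ⬝ᵥ x) : ∃ x ∈ S, u ≤ x := by
  classical
  obtain ⟨x₀, hx₀, -⟩ := h 0 le_rfl
  suffices hu : u ∈ S + Set.Iic (0 : ι → ℝ) by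
    obtain ⟨x, hx, y, hy, rfl⟩ := hu
    exact ⟨x, hx, add_le_of_nonpos_right hy⟩
  by_contra hu
  have hsub : S ⊆ S + Set.Iic 0 := fun x hx => ⟨x, hx, 0, Set.mem_Iic.mpr le_rfl, add_zero x⟩
  obtain ⟨f, s, hfC, hsu⟩ := geometric_hahn_banach_closed_point
    (hS_conv.add (convex_Iic _)) (isClosed_Iic.add_left_of_isCompact hS_cpt) hu
  set e : ι → ι → ℝ := fun i j => if i = j then 1 else 0
  set a : ι → ℝ := fun i => f (e i)
  have hf : ∀ z, f z = a ⬝ᵥ z := fun z => by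
    simpa [dotProduct, mul_comm] using LinearMap.pi_apply_eq_sum_univ f.toLinearMap z
  -- `f` is bounded above on `x₀ + (-∞, 0]ⁿ`, so it cannot decrease along any coordinate
  have ha : 0 ≤ a := by
    intro i
    by_contra! hai
    have hmem : x₀ + ((s - f x₀) / a i) • e i ∈ S + Set.Iic (0 : ι → ℝ) := by
      refine Set.add_mem_add hx₀ fun j => ?_
      have hneg : (s - f x₀) / a i ≤ 0 :=
        div_nonpos_of_nonneg_of_nonpos (by linarith [hfC x₀ (hsub hx₀)]) hai.le
      by_cases hij : i = j
      · subst hij; simpa [e] using hneg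
      · simp [e, hij]
    have hlt := hfC _ hmem
    rw [map_add, map_smul, smul_eq_mul, div_mul_cancel₀ _ hai.ne] at hlt
    linarith
  obtain ⟨x, hx, hax⟩ := h a ha
  have hxs := hfC x (hsub hx)
  rw [hf] at hxs hsu
  linarith

lemma isCompact_doublyStochastic {ι : Type*} [Fintype ι] [DecidableEq ι] :
    IsCompact (doublyStochastic ℝ ι : Set (Matrix ι ι ℝ)) := by
  rw [doublyStochastic_eq_convexHull_permMatrix]
  exact (Set.finite_range fun σ : Equiv.Perm ι => σ.permMatrix ℝ).isCompact_convexHull ℝ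

lemma dStoch_iff_mem_doublyStochastic {n : ℕ} {D : Matrix (Fin n) (Fin n) ℝ} :
    DStoch D ↔ D ∈ doublyStochastic ℝ (Fin n) :=
  mem_doublyStochastic_iff_sum.symm

section WeakMajorization

variable {n : ℕ}

lemma exists_perm_dotProduct_le_of_pSumDesc_le {u v a : Fin n → ℝ}
    (h : ∀ k, pSumDesc u k ≤ pSumDesc v k) (ha : 0 ≤ a) :
    ∃ σ : Equiv.Perm (Fin n), a ⬝ᵥ u ≤ a ⬝ᵥ (v ∘ σ) := by
  obtain ⟨σ, hσ⟩ := exists_perm_sortDesc_dotProduct_sortDesc_eq a v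
  refine ⟨σ, ?_⟩
  calc a ⬝ᵥ u ≤ sortDesc a ⬝ᵥ sortDesc u := dotProduct_le_sortDesc_dotProduct_sortDesc a u
    _ ≤ sortDesc a ⬝ᵥ sortDesc v :=
      dotProduct_le_dotProduct_of_prefixSum_le (antitone_sortDesc a)
        (fun i => ha (sortDescPerm a i)) fun k => by simpa only [pSumDesc_eq_prefixSum] using h k
    _ = a ⬝ᵥ (v ∘ σ) := hσ

lemma exists_mem_doublyStochastic_le_mulVec {u v : Fin n → ℝ}
    (h : ∀ k, pSumDesc u k ≤ pSumDesc v k) :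
    ∃ D ∈ doublyStochastic ℝ (Fin n), u ≤ D *ᵥ v := by
  let L : Matrix (Fin n) (Fin n) ℝ →ₗ[ℝ] Fin n → ℝ :=
    { toFun := (· *ᵥ v), map_add' := (add_mulVec · · v), map_smul' := fun c M => smul_mulVec c M v }
  obtain ⟨_, ⟨D, hD, rfl⟩, hle⟩ := exists_le_of_forall_dotProduct_le
    (isCompact_doublyStochastic.image L.continuous_of_finiteDimensional)
    (convex_doublyStochastic.linear_image L) fun a ha => by
      obtain ⟨σ, hσ⟩ := exists_perm_dotProduct_le_of_pSumDesc_le h ha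
      exact ⟨_, ⟨_, permMatrix_mem_doublyStochastic, rfl⟩, by simpa [L, permMatrix_mulVec] using hσ⟩
  exact ⟨D, hD, hle⟩

end WeakMajorization

theorem stmt8_general {n : ℕ} (u v : Fin n → ℝ) :
    (∀ k : ℕ, pSumDesc u k ≤ pSumDesc v k) ↔
      ∃ D : Matrix (Fin n) (Fin n) ℝ, DStoch D ∧ ∀ i, u i ≤ ∑ j, D i j * v j := by
  constructor
  · intro h
    obtain ⟨D, hD, hle⟩ := exists_mem_doublyStochastic_le_mulVec h
    exact ⟨D, dStoch_iff_mem_doublyStochastic.mpr hD, hle⟩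
  · rintro ⟨D, hD, hle⟩ k
    exact pSumDesc_le_of_le_mulVec hD hle k

theorem stmt8 {n : ℕ} (u v : Fin n → ℝ) (hu : ∀ i, 0 ≤ u i) (hv : ∀ i, 0 ≤ v i) :
    (∀ k : ℕ, pSumDesc u k ≤ pSumDesc v k) ↔
      ∃ D : Matrix (Fin n) (Fin n) ℝ, DStoch D ∧ ∀ i, u i ≤ ∑ j, D i j * v j :=
  stmt8_general u v
end
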